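/- arXiv:2512.02597 — 2 statements merged into one kernel-verified Lean document; each statement's English description precedes it below -/
import Mathlib

section
/- Let R be a nonassociative ring with additive maps σ, δ satisfying σ(1)=1 and δ(1)=0, where σ is surjective. If the generalized polynomial ring R[X;σ,δ] is a generalized nonassociative Ore extension of R (i.e., both a left and a right GNOE), then σ is injective (hence bijective). -/
open Finset
open scoped Classical

section Defs

variable {R : Type*} {S : Type*}

/-- Iterated power: `pw x 0 = 1`, `pw x (n+1) = pw x n * x`. -/
def pw [One S] [Mul S] (x : S) : ℕ → S
  | 0 => 1
  | n + 1 => pw x n * x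

/-- `x` is power-associative. -/
def PowAssoc [One S] [Mul S] (x : S) : Prop := ∀ m n : ℕ, pw x m * pw x n = pw x (m + n)

variable [NonAssocRing R] [NonAssocRing S]

/-- Interpret a finitely supported coefficient family as a left polynomial `Σ f(cᵢ)·xⁱ`. -/
noncomputable def lpoly (f : R →+* S) (x : S) (c : ℕ →₀ R) : S :=
  c.sum fun i r => f r * pw x i

/-- Right polynomial `Σ xⁱ·f(cᵢ)`. -/
noncomputable def rpoly (f : R →+* S) (x : S) (c : ℕ →₀ R) : S :=
  c.sum fun i r => pw x i * f r

/-- Left degree (`⊥` plays the role of `-∞`), computed from a representation as a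
left polynomial in `x` (unique when `{1,x,x²,…}` is a left basis). -/
noncomputable def degl (f : R →+* S) (x : S) (p : S) : WithBot ℕ :=
  if h : ∃ c : ℕ →₀ R, lpoly f x c = p then (Classical.choose h).support.max else ⊥

/-- Left leading coefficient (`0` for the zero polynomial). -/
noncomputable def lcl (f : R →+* S) (x : S) (p : S) : R :=
  if h : ∃ c : ℕ →₀ R, lpoly f x c = p then
    (Classical.choose h) ((Classical.choose h).support.max.unbotD 0) else 0

/-- Right degree. -/
noncomputable def degr (f : R →+* S) (x : S) (p : S) : WithBot ℕ :=
  if h : ∃ c : ℕ →₀ R, rpoly f x c = p then (Classical.choose h).support.max else ⊥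

/-- Right leading coefficient. -/
noncomputable def lcr (f : R →+* S) (x : S) (p : S) : R :=
  if h : ∃ c : ℕ →₀ R, rpoly f x c = p then
    (Classical.choose h) ((Classical.choose h).support.max.unbotD 0) else 0

/-- `(S,x)` is a left generalized nonassociative Ore extension of `R`
(with the embedding `f : R →+* S`). -/
structure IsLeftGNOE (f : R →+* S) (x : S) : Prop where
  inj : Function.Injective f
  powAssoc : PowAssoc x
  basis : Function.Bijective (lpoly f x)
  closed : ∀ (m n : ℕ) (r s : R), ∃ c : ℕ →₀ R,
    lpoly f x c = (f r * pw x m) * (f s * pw x n) ∧ ∀ i, m + n < i → c i = 0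

/-- `(S,x)` is a right generalized nonassociative Ore extension of `R`. -/
structure IsRightGNOE (f : R →+* S) (x : S) : Prop where
  inj : Function.Injective f
  powAssoc : PowAssoc x
  basis : Function.Bijective (rpoly f x)
  closed : ∀ (m n : ℕ) (r s : R), ∃ c : ℕ →₀ R,
    rpoly f x c = (pw x m * f r) * (pw x n * f s) ∧ ∀ i, m + n < i → c i = 0

/-- Right ideal of a (nonassociative) ring. -/
def IsRightIdeal (T : Type*) [NonAssocRing T] (I : Set T) : Prop :=
  (0 : T) ∈ I ∧ (∀ a b, a ∈ I → b ∈ I → a + b ∈ I) ∧ (∀ a, a ∈ I → -a ∈ I) ∧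
    ∀ a t, a ∈ I → a * t ∈ I

/-- Left ideal of a (nonassociative) ring. -/
def IsLeftIdeal (T : Type*) [NonAssocRing T] (I : Set T) : Prop :=
  (0 : T) ∈ I ∧ (∀ a b, a ∈ I → b ∈ I → a + b ∈ I) ∧ (∀ a, a ∈ I → -a ∈ I) ∧
    ∀ a t, a ∈ I → t * a ∈ I

/-- The right ideal generated by a set. -/
def rIdealGen (T : Type*) [NonAssocRing T] (G : Set T) : Set T :=
  ⋂₀ {I : Set T | IsRightIdeal T I ∧ G ⊆ I}

/-- The left ideal generated by a set. -/
def lIdealGen (T : Type*) [NonAssocRing T] (G : Set T) : Set T :=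
  ⋂₀ {I : Set T | IsLeftIdeal T I ∧ G ⊆ I}

/-- Right Noetherian: every right ideal is finitely generated. -/
def RightNoeth (T : Type*) [NonAssocRing T] : Prop :=
  ∀ I : Set T, IsRightIdeal T I → ∃ G : Finset T, I = rIdealGen T ↑G

/-- Left Noetherian: every left ideal is finitely generated. -/
def LeftNoeth (T : Type*) [NonAssocRing T] : Prop :=
  ∀ I : Set T, IsLeftIdeal T I → ∃ G : Finset T, I = lIdealGen T ↑G

/-- `M` is a right `R`-submodule of `S` (via `f`). -/
def IsRightRSub (f : R →+* S) (M : Set S) : Prop :=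
  (0 : S) ∈ M ∧ (∀ a b, a ∈ M → b ∈ M → a + b ∈ M) ∧ (∀ a, a ∈ M → -a ∈ M) ∧
    ∀ a r, a ∈ M → a * f r ∈ M

/-- `M` is a left `R`-submodule of `S` (via `f`). -/
def IsLeftRSub (f : R →+* S) (M : Set S) : Prop :=
  (0 : S) ∈ M ∧ (∀ a b, a ∈ M → b ∈ M → a + b ∈ M) ∧ (∀ a, a ∈ M → -a ∈ M) ∧
    ∀ a r, a ∈ M → f r * a ∈ M

/-- The right `R`-submodule of `S` generated by a set. -/
def rSubGen (f : R →+* S) (G : Set S) : Set S :=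
  ⋂₀ {M : Set S | IsRightRSub f M ∧ G ⊆ M}

/-- `s` belongs to the right ideal of `S` generated by `p 0, …, p (n-1)` and admits a
left-degree-additive representation `s = Σⱼ (⋯((p_{iⱼ} s_{j1})s_{j2})⋯)s_{jm}` whose degree
bound `max_j (deg_l p_{iⱼ} + Σₖ deg_l s_{jk})` equals `deg_l s`. -/
def LDegAddMem (f : R →+* S) (x : S) {n : ℕ} (p : Fin n → S) (s : S) : Prop :=
  ∃ L : List (Fin n × List S),
    s = (L.map fun t => t.2.foldl (· * ·) (p t.1)).sum ∧
    degl f x s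
      = (L.map fun t => degl f x (p t.1) + (t.2.map (degl f x)).sum).foldr max ⊥

/-- `s` belongs to the left ideal of `S` generated by `p 0, …, p (n-1)` and admits a
right-degree-additive representation. -/
def RDegAddMem (f : R →+* S) (x : S) {n : ℕ} (p : Fin n → S) (s : S) : Prop :=
  ∃ L : List (Fin n × List S),
    s = (L.map fun t => t.2.foldl (fun b a => a * b) (p t.1)).sum ∧
    degr f x s
      = (L.map fun t => degr f x (p t.1) + (t.2.map (degr f x)).sum).foldr max ⊥

/-- The left Euclidean division algorithm for `(S,x)` over `R`. -/
def LeftEDA (f : R →+* S) (x : S) : Prop :=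
  ∀ (n : ℕ) (p : Fin n → S) (q : S), q ≠ 0 →
    (∀ i, degl f x (p i) ≤ degl f x q) →
    lcl f x q ∈ rIdealGen R (Set.range fun i => lcl f x (p i)) →
    ∃ s, LDegAddMem f x p s ∧ degl f x (q - s) < degl f x q

/-- The right Euclidean division algorithm for `(S,x)` over `R`. -/
def RightEDA (f : R →+* S) (x : S) : Prop :=
  ∀ (n : ℕ) (p : Fin n → S) (q : S), q ≠ 0 →
    (∀ i, degr f x (p i) ≤ degr f x q) →
    lcr f x q ∈ lIdealGen R (Set.range fun i => lcr f x (p i)) →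
    ∃ s, RDegAddMem f x p s ∧ degr f x (q - s) < degr f x q

/-- The maps `πᵢᵐ`: the sum of all `C(m,i)` compositions of `i` copies of `σ`
and `m - i` copies of `δ`. -/
def pimap (σ δ : R → R) : ℕ → ℕ → R → R
  | 0, 0 => id
  | _ + 1, 0 => fun _ => 0
  | 0, m + 1 => fun r => δ (pimap σ δ 0 m r)
  | i + 1, m + 1 => fun r => σ (pimap σ δ i m r) + δ (pimap σ δ (i + 1) m r)

/-- `(S,x)` realizes the generalized polynomial ring `R[X;σ,δ]`: `{1,x,x²,…}` is a left
`R`-basis and multiplication is given by `(rxᵐ)(sxⁿ) = Σᵢ (r πᵢᵐ(s)) x^{i+n}`. -/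
def IsGPolyRing (σ δ : R → R) (f : R →+* S) (x : S) : Prop :=
  Function.Injective f ∧ PowAssoc x ∧ Function.Bijective (lpoly f x) ∧
    ∀ (r s : R) (m n : ℕ),
      (f r * pw x m) * (f s * pw x n)
        = ∑ i ∈ Finset.range (m + 1), f (r * pimap σ δ i m s) * pw x (i + n)

/-- `(S,x)` realizes the flipped generalized polynomial ring `R[X;σ,δ]^fl`:
multiplication is given by `(rxᵐ)(sxⁿ) = Σᵢ τₙ(r, πᵢᵐ(s)) x^{i+n}`. -/
def IsFlipGPolyRing (σ δ : R → R) (f : R →+* S) (x : S) : Prop :=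
  Function.Injective f ∧ PowAssoc x ∧ Function.Bijective (lpoly f x) ∧
    ∀ (r s : R) (m n : ℕ),
      (f r * pw x m) * (f s * pw x n)
        = ∑ i ∈ Finset.range (m + 1),
            f (if Even n then r * pimap σ δ i m s else pimap σ δ i m s * r) * pw x (i + n)

end Defs

/-- if `R[X;σ,δ]` (with `σ` an additive surjection) is a GNOE of `R`,
then `σ` is injective (hence bijective). -/
theorem stmt4 {R S : Type*} [NonAssocRing R] [NonAssocRing S] (f : R →+* S) (x : S) (σ δ : R → R)
    (hσadd : ∀ a b : R, σ (a + b) = σ a + σ b) (hδadd : ∀ a b : R, δ (a + b) = δ a + δ b)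
    (hσ1 : σ 1 = 1) (hδ1 : δ 1 = 0)
    (hσsurj : Function.Surjective σ)
    (hpoly : IsGPolyRing σ δ f x)
    (hrbasis : Function.Bijective (rpoly f x))
    (hrclosed : ∀ (m n : ℕ) (r s : R), ∃ c : ℕ →₀ R,
      rpoly f x c = (pw x m * f r) * (pw x n * f s) ∧ ∀ i, m + n < i → c i = 0) :
    Function.Injective σ := by
  -- Key: any u with σ u = 0 must be 0.
  have hδ0 : δ 0 = 0 := by
    have := hδadd 0 0
    simpa using this
  have key : ∀ u : R, σ u = 0 → u = 0 := by
    intro u hu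
    have h := hpoly.2.2.2 1 u 1 0
    have hL : (f 1 * pw x 1) * (f u * pw x 0) = rpoly f x (Finsupp.single 1 u) := by
      simp [rpoly, Finsupp.sum_single_index, pw]
    have hR : (∑ i ∈ Finset.range (1 + 1), f (1 * pimap σ δ i 1 u) * pw x (i + 0))
        = rpoly f x (Finsupp.single 0 (δ u)) := by
      have h0 : pimap σ δ 0 1 u = δ u := rfl
      have h1 : pimap σ δ 1 1 u = σ u + δ 0 := rfl
      simp [rpoly, Finsupp.sum_single_index, Finset.sum_range_succ, h0, h1, hu, hδ0, pw]
    have heq : rpoly f x (Finsupp.single 1 u) = rpoly f x (Finsupp.single 0 (δ u)) := by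
      rw [← hL, h, hR]
    have := hrbasis.1 heq
    have := DFunLike.congr_fun this 1
    simpa using this
  intro a b hab
  have h : σ (a - b) + σ b = 0 + σ b := by
    rw [← hσadd, sub_add_cancel, hab, zero_add]
  exact sub_eq_zero.mp (key _ (add_right_cancel h))
end

section
/- Let R be a nonassociative ring with an automorphism σ (a bijective multiplicative and additive map with σ(1)=1) and an additive map δ with δ(1)=0. Then R[X;σ,δ] satisfies the right Euclidean division algorithm, and hence the (two-sided) Euclidean division algorithm. -/
open Finset
open scoped Classical

section Aux16
variable {R S : Type*} [NonAssocRing R] [NonAssocRing S]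

lemma aux16_add_zero' {σ : R → R} (hσadd : ∀ a b : R, σ (a + b) = σ a + σ b) : σ 0 = 0 := by
  have h := hσadd 0 0
  rw [add_zero] at h
  exact (right_eq_add.mp h)

lemma aux16_iter_add {σ : R → R} (hσadd : ∀ a b : R, σ (a + b) = σ a + σ b) (n : ℕ) :
    ∀ a b : R, σ^[n] (a + b) = σ^[n] a + σ^[n] b := by
  induction n with
  | zero => simp
  | succ n ih =>
    intro a b
    rw [Function.iterate_succ_apply', Function.iterate_succ_apply', Function.iterate_succ_apply',
      ih, hσadd]

lemma aux16_iter_zero {σ : R → R} (hσadd : ∀ a b : R, σ (a + b) = σ a + σ b) (n : ℕ) :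
    σ^[n] 0 = 0 :=
  aux16_add_zero' (aux16_iter_add hσadd n)

lemma aux16_iter_mul {σ : R → R} (hσmul : ∀ a b : R, σ (a * b) = σ a * σ b) (n : ℕ) :
    ∀ a b : R, σ^[n] (a * b) = σ^[n] a * σ^[n] b := by
  induction n with
  | zero => simp
  | succ n ih =>
    intro a b
    rw [Function.iterate_succ_apply', Function.iterate_succ_apply', Function.iterate_succ_apply',
      ih, hσmul]

section Pimap
variable {σ δ : R → R} (hσadd : ∀ a b : R, σ (a + b) = σ a + σ b)
  (hδadd : ∀ a b : R, δ (a + b) = δ a + δ b)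

include hσadd hδadd in
lemma aux16_pimap_gt : ∀ m i : ℕ, m < i → ∀ r : R, pimap σ δ i m r = 0 := by
  intro m
  induction m with
  | zero =>
    intro i hi r
    obtain ⟨k, rfl⟩ := Nat.exists_eq_add_of_lt hi
    simp [pimap]
  | succ m ih =>
    intro i hi r
    obtain ⟨k, rfl⟩ : ∃ k, i = k + 1 := ⟨i - 1, by omega⟩
    show σ (pimap σ δ k m r) + δ (pimap σ δ (k + 1) m r) = 0
    rw [ih k (by omega) r, ih (k+1) (by omega) r, aux16_add_zero' hσadd,
      aux16_add_zero' hδadd, add_zero]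

include hσadd hδadd in
lemma aux16_pimap_diag : ∀ m : ℕ, ∀ r : R, pimap σ δ m m r = σ^[m] r := by
  intro m
  induction m with
  | zero => intro r; rfl
  | succ m ih =>
    intro r
    show σ (pimap σ δ m m r) + δ (pimap σ δ (m + 1) m r) = _
    rw [ih, aux16_pimap_gt hσadd hδadd m (m+1) (by omega), aux16_add_zero' hδadd, add_zero,
      Function.iterate_succ_apply']

include hσadd hδadd in
lemma aux16_pimap_add : ∀ m i : ℕ, ∀ a b : R,
    pimap σ δ i m (a + b) = pimap σ δ i m a + pimap σ δ i m b := by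
  intro m
  induction m with
  | zero =>
    intro i a b
    match i with
    | 0 => simp [pimap]
    | k + 1 => simp [pimap]
  | succ m ih =>
    intro i a b
    match i with
    | 0 =>
      show δ (pimap σ δ 0 m (a+b)) = δ (pimap σ δ 0 m a) + δ (pimap σ δ 0 m b)
      rw [ih, hδadd]
    | k + 1 =>
      show σ (pimap σ δ k m (a+b)) + δ (pimap σ δ (k+1) m (a+b)) = _
      rw [ih, ih, hσadd, hδadd]
      show _ = σ (pimap σ δ k m a) + δ (pimap σ δ (k + 1) m a)
        + (σ (pimap σ δ k m b) + δ (pimap σ δ (k + 1) m b))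
      abel

include hσadd hδadd in
lemma aux16_pimap_zero (m i : ℕ) : pimap σ δ i m (0 : R) = 0 :=
  aux16_add_zero' (aux16_pimap_add hσadd hδadd m i)

end Pimap
end Aux16
section Aux16b
variable {R S : Type*} [NonAssocRing R] [NonAssocRing S] (f : R →+* S) (x : S)

lemma aux16_lpoly_single (k : ℕ) (a : R) :
    lpoly f x (Finsupp.single k a) = f a * pw x k :=
  Finsupp.sum_single_index (by simp)

lemma aux16_lpoly_zero : lpoly f x 0 = 0 := Finsupp.sum_zero_index

lemma aux16_lpoly_add (c c' : ℕ →₀ R) :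
    lpoly f x (c + c') = lpoly f x c + lpoly f x c' :=
  Finsupp.sum_add_index' (fun a => by simp) (fun a b₁ b₂ => by rw [map_add, add_mul])

/-- `lpoly` as an additive monoid hom. -/
noncomputable def aux16_lpolyHom : (ℕ →₀ R) →+ S where
  toFun := lpoly f x
  map_zero' := aux16_lpoly_zero f x
  map_add' := aux16_lpoly_add f x

variable (hbij : Function.Bijective (lpoly f x))

/-- The unique left representation. -/
noncomputable def aux16_repr (q : S) : ℕ →₀ R := (Equiv.ofBijective _ hbij).symm q

lemma aux16_lpoly_repr (q : S) : lpoly f x (aux16_repr f x hbij q) = q :=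
  (Equiv.ofBijective _ hbij).apply_symm_apply q

lemma aux16_repr_eq_of {c : ℕ →₀ R} {q : S} (h : lpoly f x c = q) :
    aux16_repr f x hbij q = c :=
  hbij.1 (by rw [aux16_lpoly_repr, h])

lemma aux16_repr_zero : aux16_repr f x hbij 0 = 0 :=
  aux16_repr_eq_of f x hbij (aux16_lpoly_zero f x)

lemma aux16_repr_sub (q s : S) :
    aux16_repr f x hbij (q - s) = aux16_repr f x hbij q - aux16_repr f x hbij s := by
  apply aux16_repr_eq_of
  have h2 : ∀ a b : ℕ →₀ R, lpoly f x (a - b) = lpoly f x a - lpoly f x b := fun a b =>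
    map_sub (aux16_lpolyHom f x) a b
  rw [h2, aux16_lpoly_repr, aux16_lpoly_repr]

lemma aux16_repr_add (q s : S) :
    aux16_repr f x hbij (q + s) = aux16_repr f x hbij q + aux16_repr f x hbij s := by
  apply aux16_repr_eq_of
  rw [aux16_lpoly_add, aux16_lpoly_repr, aux16_lpoly_repr]

lemma aux16_repr_ne_zero {q : S} (hq : q ≠ 0) : aux16_repr f x hbij q ≠ 0 := by
  intro h
  apply hq
  rw [← aux16_lpoly_repr f x hbij q, h, aux16_lpoly_zero]

lemma aux16_degl_eq (q : S) : degl f x q = (aux16_repr f x hbij q).support.max := by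
  have h : ∃ c : ℕ →₀ R, lpoly f x c = q := ⟨_, aux16_lpoly_repr f x hbij q⟩
  rw [degl, dif_pos h]
  have : Classical.choose h = aux16_repr f x hbij q :=
    hbij.1 (by rw [Classical.choose_spec h, aux16_lpoly_repr])
  rw [this]

lemma aux16_lcl_eq (q : S) :
    lcl f x q = (aux16_repr f x hbij q) ((aux16_repr f x hbij q).support.max.unbotD 0) := by
  have h : ∃ c : ℕ →₀ R, lpoly f x c = q := ⟨_, aux16_lpoly_repr f x hbij q⟩
  rw [lcl, dif_pos h]
  have : Classical.choose h = aux16_repr f x hbij q :=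
    hbij.1 (by rw [Classical.choose_spec h, aux16_lpoly_repr])
  rw [this]

end Aux16b

section Aux16c
variable {R : Type*} [NonAssocRing R]

lemma aux16_max_eq (c : ℕ →₀ R) (D : ℕ) (hD : c D ≠ 0) (h : ∀ k, D < k → c k = 0) :
    c.support.max = (D : WithBot ℕ) := by
  simp only [Nat.cast_withBot]
  apply le_antisymm
  · rw [Finset.max_le_iff]
    intro a ha
    rw [Finsupp.mem_support_iff] at ha
    by_contra hc
    exact ha (h a (by exact_mod_cast not_le.mp hc))
  · exact Finset.le_max (Finsupp.mem_support_iff.mpr hD)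

lemma aux16_max_le_iff (c : ℕ →₀ R) (n : ℕ) :
    c.support.max ≤ (n : WithBot ℕ) ↔ ∀ k, n < k → c k = 0 := by
  simp only [Nat.cast_withBot]
  rw [Finset.max_le_iff]
  constructor
  · intro h k hk
    by_contra hc
    have := h k (Finsupp.mem_support_iff.mpr hc)
    exact absurd (by exact_mod_cast this) (not_le.mpr hk)
  · intro h a ha
    rw [Finsupp.mem_support_iff] at ha
    by_contra hc
    exact ha (h a (by exact_mod_cast not_le.mp hc))

lemma aux16_max_lt_iff (c : ℕ →₀ R) (n : ℕ) :
    c.support.max < (n : WithBot ℕ) ↔ ∀ k, n ≤ k → c k = 0 := by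
  simp only [Nat.cast_withBot]
  constructor
  · intro h k hk
    by_contra hc
    have h1 : (k : WithBot ℕ) ≤ c.support.max := Finset.le_max (Finsupp.mem_support_iff.mpr hc)
    have h2 : (k : WithBot ℕ) < (n : WithBot ℕ) := lt_of_le_of_lt h1 h
    exact absurd (by exact_mod_cast h2) (not_lt.mpr hk)
  · intro h
    cases hmax : c.support.max with
    | bot => exact WithBot.bot_lt_coe n
    | coe a =>
      have ha := Finset.mem_of_max hmax
      rw [Finsupp.mem_support_iff] at ha
      by_contra hc
      exact ha (h a (by
        have : ¬ ((a : WithBot ℕ) < (n : WithBot ℕ)) := hc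
        exact_mod_cast not_lt.mp this))

end Aux16c
section Aux16d
variable {R S : Type*} [NonAssocRing R] [NonAssocRing S] (f : R →+* S) (x : S) (σ δ : R → R)
variable (hσadd : ∀ a b : R, σ (a + b) = σ a + σ b)
variable (hδadd : ∀ a b : R, δ (a + b) = δ a + δ b)
variable (hbij : Function.Bijective (lpoly f x))
variable (hmul : ∀ (r s : R) (m n : ℕ),
    (f r * pw x m) * (f s * pw x n)
      = ∑ i ∈ Finset.range (m + 1), f (r * pimap σ δ i m s) * pw x (i + n))

include hσadd hδadd hmul in
/-- Coefficient control for `p * (f r * xᵉ)`. -/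
lemma aux16_coeff_mul_right (p : S) (r : R) (e n : ℕ)
    (hp : ∀ k, n < k → aux16_repr f x hbij p k = 0) :
    (∀ k, n + e < k → aux16_repr f x hbij (p * (f r * pw x e)) k = 0) ∧
    aux16_repr f x hbij (p * (f r * pw x e)) (n + e)
      = aux16_repr f x hbij p n * σ^[n] r := by
  classical
  set c := aux16_repr f x hbij p with hc
  set C : ℕ →₀ R :=
    c.sum fun j s => ∑ i ∈ Finset.range (j + 1), Finsupp.single (i + e) (s * pimap σ δ i j r)
    with hC
  have h1 : lpoly f x C = p * (f r * pw x e) := by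
    show aux16_lpolyHom f x C = _
    rw [hC, map_finsuppSum]
    conv_rhs => rw [← aux16_lpoly_repr f x hbij p, ← hc]
    show _ = (Finsupp.sum c fun j s => f s * pw x j) * (f r * pw x e)
    rw [Finsupp.sum_mul]
    apply Finsupp.sum_congr
    intro j _
    rw [map_sum, hmul (c j) r j e]
    apply Finset.sum_congr rfl
    intro i _
    exact aux16_lpoly_single f x (i + e) (c j * pimap σ δ i j r)
  have hrepr : aux16_repr f x hbij (p * (f r * pw x e)) = C := aux16_repr_eq_of f x hbij h1
  have hsupp_le : ∀ j, j ∈ c.support → j ≤ n := by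
    intro j hj
    rw [Finsupp.mem_support_iff] at hj
    by_contra hjn
    exact hj (hp j (by omega))
  have happ : ∀ k, C k = ∑ j ∈ c.support, ∑ i ∈ Finset.range (j + 1),
      if i + e = k then c j * pimap σ δ i j r else 0 := by
    intro k
    rw [hC, Finsupp.sum_apply, Finsupp.sum]
    apply Finset.sum_congr rfl
    intro j _
    rw [Finsupp.finset_sum_apply]
    apply Finset.sum_congr rfl
    intro i _
    exact Finsupp.single_apply
  constructor
  · intro k hk
    rw [hrepr, happ]
    apply Finset.sum_eq_zero
    intro j hj
    apply Finset.sum_eq_zero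
    intro i hi
    rw [Finset.mem_range] at hi
    have := hsupp_le j hj
    rw [if_neg (by omega)]
  · rw [hrepr, happ]
    rw [Finset.sum_eq_single n]
    · simp only [add_left_inj]
      rw [Finset.sum_ite_eq' (Finset.range (n + 1)) n (fun i => c n * pimap σ δ i n r),
        if_pos (Finset.mem_range.mpr (by omega)), aux16_pimap_diag hσadd hδadd]
    · intro j hj hjn
      apply Finset.sum_eq_zero
      intro i hi
      rw [Finset.mem_range] at hi
      have := hsupp_le j hj
      have hjn' : j < n := lt_of_le_of_ne this hjn
      rw [if_neg (by omega)]
    · intro hn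
      rw [Finsupp.notMem_support_iff] at hn
      rw [hn]
      simp

include hσadd hδadd hmul in
/-- Coefficient control for `(f r * xᵉ) * p`. -/
lemma aux16_coeff_mul_left (p : S) (r : R) (e n : ℕ)
    (hp : ∀ k, n < k → aux16_repr f x hbij p k = 0) :
    (∀ k, e + n < k → aux16_repr f x hbij ((f r * pw x e) * p) k = 0) ∧
    aux16_repr f x hbij ((f r * pw x e) * p) (e + n)
      = r * σ^[e] (aux16_repr f x hbij p n) := by
  classical
  set c := aux16_repr f x hbij p with hc
  set C : ℕ →₀ R :=
    c.sum fun j s => ∑ i ∈ Finset.range (e + 1), Finsupp.single (i + j) (r * pimap σ δ i e s)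
    with hC
  have h1 : lpoly f x C = (f r * pw x e) * p := by
    show aux16_lpolyHom f x C = _
    rw [hC, map_finsuppSum]
    conv_rhs => rw [← aux16_lpoly_repr f x hbij p, ← hc]
    show _ = (f r * pw x e) * (Finsupp.sum c fun j s => f s * pw x j)
    rw [Finsupp.mul_sum]
    apply Finsupp.sum_congr
    intro j _
    rw [map_sum, hmul r (c j) e j]
    apply Finset.sum_congr rfl
    intro i _
    exact aux16_lpoly_single f x (i + j) (r * pimap σ δ i e (c j))
  have hrepr : aux16_repr f x hbij ((f r * pw x e) * p) = C := aux16_repr_eq_of f x hbij h1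
  have hsupp_le : ∀ j, j ∈ c.support → j ≤ n := by
    intro j hj
    rw [Finsupp.mem_support_iff] at hj
    by_contra hjn
    exact hj (hp j (by omega))
  have happ : ∀ k, C k = ∑ j ∈ c.support, ∑ i ∈ Finset.range (e + 1),
      if i + j = k then r * pimap σ δ i e (c j) else 0 := by
    intro k
    rw [hC, Finsupp.sum_apply, Finsupp.sum]
    apply Finset.sum_congr rfl
    intro j _
    rw [Finsupp.finset_sum_apply]
    apply Finset.sum_congr rfl
    intro i _
    exact Finsupp.single_apply
  constructor
  · intro k hk
    rw [hrepr, happ]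
    apply Finset.sum_eq_zero
    intro j hj
    apply Finset.sum_eq_zero
    intro i hi
    rw [Finset.mem_range] at hi
    have := hsupp_le j hj
    rw [if_neg (by omega)]
  · rw [hrepr, happ]
    rw [Finset.sum_eq_single n]
    · simp only [add_left_inj]
      rw [Finset.sum_ite_eq' (Finset.range (e + 1)) e (fun i => r * pimap σ δ i e (c n)),
        if_pos (Finset.mem_range.mpr (by omega)), aux16_pimap_diag hσadd hδadd]
    · intro j hj hjn
      apply Finset.sum_eq_zero
      intro i hi
      rw [Finset.mem_range] at hi
      have := hsupp_le j hj
      have hjn' : j < n := lt_of_le_of_ne this hjn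
      rw [if_neg (by omega)]
    · intro hn
      rw [Finsupp.notMem_support_iff] at hn
      apply Finset.sum_eq_zero
      intro i hi
      rw [hn, aux16_pimap_zero hσadd hδadd, mul_zero]
      simp

end Aux16d
section Aux16e
variable {R S : Type*} [NonAssocRing R] [NonAssocRing S] (f : R →+* S) (x : S) (σ δ : R → R)

/-- Transform turning a right representation into a left representation. -/
noncomputable def aux16_T (c : ℕ →₀ R) : ℕ →₀ R :=
  c.sum fun i r => ∑ j ∈ Finset.range (i + 1), Finsupp.single j (pimap σ δ j i r)

variable (hσadd : ∀ a b : R, σ (a + b) = σ a + σ b)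
variable (hδadd : ∀ a b : R, δ (a + b) = δ a + δ b)

include hσadd hδadd in
lemma aux16_T_add (c c' : ℕ →₀ R) :
    aux16_T σ δ (c + c') = aux16_T σ δ c + aux16_T σ δ c' := by
  refine Finsupp.sum_add_index' (fun i => ?_) (fun i b₁ b₂ => ?_)
  · apply Finset.sum_eq_zero
    intro j _
    rw [aux16_pimap_zero hσadd hδadd, Finsupp.single_zero]
  · rw [← Finset.sum_add_distrib]
    apply Finset.sum_congr rfl
    intro j _
    rw [aux16_pimap_add hσadd hδadd, Finsupp.single_add]

/-- `aux16_T` as an additive hom. -/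
noncomputable def aux16_Thom (hσadd : ∀ a b : R, σ (a + b) = σ a + σ b)
    (hδadd : ∀ a b : R, δ (a + b) = δ a + δ b) : (ℕ →₀ R) →+ (ℕ →₀ R) :=
  AddMonoidHom.mk' (aux16_T σ δ) (aux16_T_add σ δ hσadd hδadd)

variable (hmul : ∀ (r s : R) (m n : ℕ),
    (f r * pw x m) * (f s * pw x n)
      = ∑ i ∈ Finset.range (m + 1), f (r * pimap σ δ i m s) * pw x (i + n))

include hmul in
lemma aux16_lpoly_T (c : ℕ →₀ R) : lpoly f x (aux16_T σ δ c) = rpoly f x c := by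
  show aux16_lpolyHom f x _ = _
  rw [aux16_T, map_finsuppSum]
  apply Finsupp.sum_congr
  intro i _
  rw [map_sum]
  have h := hmul 1 (c i) i 0
  rw [map_one, one_mul] at h
  have hpw0 : pw x 0 = 1 := rfl
  rw [hpw0, mul_one] at h
  rw [h]
  apply Finset.sum_congr rfl
  intro j _
  show lpoly f x (Finsupp.single j (pimap σ δ j i (c i))) = _
  rw [aux16_lpoly_single, one_mul, Nat.add_zero]

include hσadd hδadd in
lemma aux16_T_top (c : ℕ →₀ R) (n : ℕ) (hc : ∀ k, n < k → c k = 0) :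
    (∀ k, n < k → aux16_T σ δ c k = 0) ∧ aux16_T σ δ c n = σ^[n] (c n) := by
  classical
  have hsupp_le : ∀ i, i ∈ c.support → i ≤ n := by
    intro i hi
    rw [Finsupp.mem_support_iff] at hi
    by_contra hin
    exact hi (hc i (by omega))
  have happ : ∀ k, aux16_T σ δ c k = ∑ i ∈ c.support, ∑ j ∈ Finset.range (i + 1),
      if j = k then pimap σ δ j i (c i) else 0 := by
    intro k
    rw [aux16_T, Finsupp.sum_apply, Finsupp.sum]
    apply Finset.sum_congr rfl
    intro i _
    rw [Finsupp.finset_sum_apply]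
    apply Finset.sum_congr rfl
    intro j _
    exact Finsupp.single_apply
  constructor
  · intro k hk
    rw [happ]
    apply Finset.sum_eq_zero
    intro i hi
    apply Finset.sum_eq_zero
    intro j hj
    rw [Finset.mem_range] at hj
    have := hsupp_le i hi
    rw [if_neg (by omega)]
  · rw [happ]
    rw [Finset.sum_eq_single n]
    · rw [Finset.sum_ite_eq' (Finset.range (n + 1)) n (fun j => pimap σ δ j n (c n)),
        if_pos (Finset.mem_range.mpr (by omega)), aux16_pimap_diag hσadd hδadd]
    · intro i hi hin
      apply Finset.sum_eq_zero
      intro j hj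
      rw [Finset.mem_range] at hj
      have := hsupp_le i hi
      have : i < n := lt_of_le_of_ne ‹i ≤ n› hin
      rw [if_neg (by omega)]
    · intro hn
      rw [Finsupp.notMem_support_iff] at hn
      apply Finset.sum_eq_zero
      intro j hj
      rw [hn, aux16_pimap_zero hσadd hδadd]
      simp

variable (hσbij : Function.Bijective σ)

include hσadd hδadd hσbij in
lemma aux16_T_surj_aux : ∀ N : ℕ, ∀ b : ℕ →₀ R, (∀ k, N ≤ k → b k = 0) →
    ∃ c : ℕ →₀ R, aux16_T σ δ c = b ∧ ∀ k, N ≤ k → c k = 0 := by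
  intro N
  induction N with
  | zero =>
    intro b hb
    have : b = 0 := Finsupp.ext fun k => hb k (Nat.zero_le k)
    refine ⟨0, ?_, fun k _ => rfl⟩
    rw [this, aux16_T, Finsupp.sum_zero_index]
  | succ N ih =>
    intro b hb
    set σinv := Function.invFun σ with hσinv
    have hri : Function.RightInverse σinv σ := Function.rightInverse_invFun hσbij.2
    set r := σinv^[N] (b N) with hr
    set c₀ : ℕ →₀ R := Finsupp.single N r with hc₀
    have hc₀top : ∀ k, N < k → c₀ k = 0 := by
      intro k hk
      rw [hc₀, Finsupp.single_apply, if_neg (by omega)]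
    obtain ⟨hT0, hT1⟩ := aux16_T_top σ δ hσadd hδadd c₀ N hc₀top
    have hTN : aux16_T σ δ c₀ N = b N := by
      rw [hT1, hc₀, Finsupp.single_eq_same, hr]
      exact (hri.iterate N) (b N)
    set b' := b - aux16_T σ δ c₀ with hb'
    have hb'z : ∀ k, N ≤ k → b' k = 0 := by
      intro k hk
      rw [hb', Finsupp.sub_apply]
      rcases Nat.eq_or_lt_of_le hk with h | h
      · rw [← h, hTN, sub_self]
      · rw [hb k (by omega), hT0 k h, sub_self]
    obtain ⟨c', hc'1, hc'2⟩ := ih b' hb'z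
    refine ⟨c₀ + c', ?_, ?_⟩
    · rw [aux16_T_add σ δ hσadd hδadd, hc'1, hb']
      abel
    · intro k hk
      rw [Finsupp.add_apply, hc₀top k (by omega), hc'2 k (by omega), add_zero]

include hσadd hδadd hσbij hmul in
lemma aux16_rpoly_bij (hbij : Function.Bijective (lpoly f x)) :
    Function.Bijective (rpoly f x) := by
  constructor
  · intro c c' h
    have hT : aux16_T σ δ c = aux16_T σ δ c' :=
      hbij.1 (by rw [aux16_lpoly_T f x σ δ hmul, aux16_lpoly_T f x σ δ hmul, h])
    have hTinj : Function.Injective (aux16_Thom σ δ hσadd hδadd) := by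
      rw [injective_iff_map_eq_zero]
      intro a ha
      by_contra haz
      have hsupp : a.support.Nonempty := by
        rw [Finset.nonempty_iff_ne_empty]
        intro he
        exact haz (Finsupp.support_eq_empty.mp he)
      set D := a.support.max' hsupp with hD
      have hDmem : D ∈ a.support := a.support.max'_mem hsupp
      have htop : ∀ k, D < k → a k = 0 := by
        intro k hk
        rw [← Finsupp.notMem_support_iff]
        intro hmem
        exact absurd (Finset.le_max' _ k hmem) (by omega)
      obtain ⟨_, h2⟩ := aux16_T_top σ δ hσadd hδadd a D htop
      have : aux16_T σ δ a D = 0 := by rw [show aux16_T σ δ a = 0 from ha]; rfl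
      rw [h2] at this
      have hz : σ^[D] (a D) = σ^[D] 0 := by rw [this, aux16_iter_zero hσadd]
      have := (hσbij.1.iterate D) hz
      rw [Finsupp.mem_support_iff] at hDmem
      exact hDmem this
    exact hTinj hT
  · intro q
    obtain ⟨b, hbq⟩ := hbij.2 q
    obtain ⟨n, hn⟩ := b.support.exists_nat_subset_range
    have hb : ∀ k, n ≤ k → b k = 0 := by
      intro k hk
      rw [← Finsupp.notMem_support_iff]
      intro hmem
      have := hn hmem
      rw [Finset.mem_range] at this
      omega
    obtain ⟨c, hc1, _⟩ := aux16_T_surj_aux σ δ hσadd hδadd hσbij n b hb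
    exact ⟨c, by rw [← aux16_lpoly_T f x σ δ hmul, hc1, hbq]⟩

end Aux16e
section Aux16f
variable {R S : Type*} [NonAssocRing R] [NonAssocRing S] (f : R →+* S) (x : S)
variable (hrbij : Function.Bijective (rpoly f x))

/-- The unique right representation. -/
noncomputable def aux16_rrepr (q : S) : ℕ →₀ R := (Equiv.ofBijective _ hrbij).symm q

lemma aux16_rpoly_rrepr (q : S) : rpoly f x (aux16_rrepr f x hrbij q) = q :=
  (Equiv.ofBijective _ hrbij).apply_symm_apply q

lemma aux16_rrepr_eq_of {c : ℕ →₀ R} {q : S} (h : rpoly f x c = q) :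
    aux16_rrepr f x hrbij q = c :=
  hrbij.1 (by rw [aux16_rpoly_rrepr, h])

lemma aux16_degr_eq (q : S) : degr f x q = (aux16_rrepr f x hrbij q).support.max := by
  have h : ∃ c : ℕ →₀ R, rpoly f x c = q := ⟨_, aux16_rpoly_rrepr f x hrbij q⟩
  rw [degr, dif_pos h]
  have : Classical.choose h = aux16_rrepr f x hrbij q :=
    hrbij.1 (by rw [Classical.choose_spec h, aux16_rpoly_rrepr])
  rw [this]

lemma aux16_lcr_eq (q : S) :
    lcr f x q = (aux16_rrepr f x hrbij q) ((aux16_rrepr f x hrbij q).support.max.unbotD 0) := by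
  have h : ∃ c : ℕ →₀ R, rpoly f x c = q := ⟨_, aux16_rpoly_rrepr f x hrbij q⟩
  rw [lcr, dif_pos h]
  have : Classical.choose h = aux16_rrepr f x hrbij q :=
    hrbij.1 (by rw [Classical.choose_spec h, aux16_rpoly_rrepr])
  rw [this]

end Aux16f

section Aux16g
variable {R S : Type*} [NonAssocRing R] [NonAssocRing S] (f : R →+* S) (x : S) (σ δ : R → R)
variable (hσadd : ∀ a b : R, σ (a + b) = σ a + σ b)
variable (hδadd : ∀ a b : R, δ (a + b) = δ a + δ b)
variable (hσbij : Function.Bijective σ)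
variable (hbij : Function.Bijective (lpoly f x))
variable (hrbij : Function.Bijective (rpoly f x))
variable (hmul : ∀ (r s : R) (m n : ℕ),
    (f r * pw x m) * (f s * pw x n)
      = ∑ i ∈ Finset.range (m + 1), f (r * pimap σ δ i m s) * pw x (i + n))

include hmul in
lemma aux16_T_rrepr (q : S) :
    aux16_T σ δ (aux16_rrepr f x hrbij q) = aux16_repr f x hbij q :=
  (aux16_repr_eq_of f x hbij
    (by rw [aux16_lpoly_T f x σ δ hmul, aux16_rpoly_rrepr f x hrbij q])).symm

include hσadd hδadd hσbij in
lemma aux16_T_max (c : ℕ →₀ R) : (aux16_T σ δ c).support.max = c.support.max := by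
  cases hm : c.support.max with
  | bot =>
    have hc : c = 0 := Finsupp.support_eq_empty.mp (Finset.max_eq_bot.mp hm)
    rw [hc, show aux16_T σ δ (0 : ℕ →₀ R) = 0 from by rw [aux16_T, Finsupp.sum_zero_index]]
    simp
  | coe D =>
    have htop : ∀ k, D < k → c k = 0 := by
      refine (aux16_max_le_iff c D).mp ?_
      rw [hm, Nat.cast_withBot]
    have hD : c D ≠ 0 := Finsupp.mem_support_iff.mp (Finset.mem_of_max hm)
    obtain ⟨h0, h1⟩ := aux16_T_top σ δ hσadd hδadd c D htop
    rw [aux16_max_eq _ D ?_ h0, Nat.cast_withBot]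
    rw [h1]
    intro hz
    exact hD ((hσbij.1.iterate D) (by rw [hz, aux16_iter_zero hσadd]))

include hσadd hδadd hσbij hbij hrbij hmul in
lemma aux16_degr_degl (q : S) : degr f x q = degl f x q := by
  rw [aux16_degr_eq f x hrbij, aux16_degl_eq f x hbij,
    ← aux16_T_rrepr f x σ δ hbij hrbij hmul q,
    aux16_T_max σ δ hσadd hδadd hσbij]

end Aux16g
section Aux16h
variable {R : Type*} [NonAssocRing R]

lemma aux16_sum_map_neg (L : List R) : (L.map (fun a => -a)).sum = -L.sum := by
  induction L with
  | nil => simp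
  | cons a L ih => simp [ih]; abel

lemma aux16_mul_list_sum (t : R) (L : List R) :
    t * L.sum = (L.map (fun a => t * a)).sum := by
  induction L with
  | nil => simp
  | cons a L ih => simp [mul_add, ih]

lemma aux16_list_sum_mul (t : R) (L : List R) :
    L.sum * t = (L.map (fun a => a * t)).sum := by
  induction L with
  | nil => simp
  | cons a L ih => simp [add_mul, ih]

lemma aux16_lIdeal_mem (G : Set R) (z : R) (hz : z ∈ lIdealGen R G) :
    ∃ L : List R, z = L.sum ∧ ∀ a ∈ L, ∃ g ∈ G, ∃ l : List R, l ≠ [] ∧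
      a = l.foldl (fun b r => r * b) g := by
  set M : Set R := {z | ∃ L : List R, z = L.sum ∧ ∀ a ∈ L, ∃ g ∈ G, ∃ l : List R, l ≠ [] ∧
    a = l.foldl (fun b r => r * b) g} with hM
  have hMideal : IsLeftIdeal R M := by
    refine ⟨⟨[], by simp, by simp⟩, ?_, ?_, ?_⟩
    · rintro a b ⟨La, ha, hLa⟩ ⟨Lb, hb, hLb⟩
      refine ⟨La ++ Lb, by rw [ha, hb, List.sum_append], ?_⟩
      intro a' ha'
      rcases List.mem_append.mp ha' with h | h
      · exact hLa a' h
      · exact hLb a' h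
    · rintro a ⟨La, ha, hLa⟩
      refine ⟨La.map (fun a => -a), by rw [aux16_sum_map_neg, ha], ?_⟩
      intro a' ha'
      obtain ⟨b, hb, rfl⟩ := List.mem_map.mp ha'
      obtain ⟨g, hg, l, hl, rfl⟩ := hLa b hb
      refine ⟨g, hg, l ++ [(-1 : R)], by simp, ?_⟩
      rw [List.foldl_append]
      simp [neg_one_mul]
    · rintro a t ⟨La, ha, hLa⟩
      refine ⟨La.map (fun a => t * a), by rw [← aux16_mul_list_sum, ha], ?_⟩
      intro a' ha'
      obtain ⟨b, hb, rfl⟩ := List.mem_map.mp ha'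
      obtain ⟨g, hg, l, hl, rfl⟩ := hLa b hb
      refine ⟨g, hg, l ++ [t], by simp, ?_⟩
      rw [List.foldl_append]
      simp
  have hGM : G ⊆ M := by
    intro g hg
    exact ⟨[g], by simp, by
      intro a ha
      rw [List.mem_singleton] at ha
      exact ⟨g, hg, [1], by simp, by simp [ha]⟩⟩
  exact hz M ⟨hMideal, hGM⟩

lemma aux16_rIdeal_mem (G : Set R) (z : R) (hz : z ∈ rIdealGen R G) :
    ∃ L : List R, z = L.sum ∧ ∀ a ∈ L, ∃ g ∈ G, ∃ l : List R, l ≠ [] ∧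
      a = l.foldl (fun b r => b * r) g := by
  set M : Set R := {z | ∃ L : List R, z = L.sum ∧ ∀ a ∈ L, ∃ g ∈ G, ∃ l : List R, l ≠ [] ∧
    a = l.foldl (fun b r => b * r) g} with hM
  have hMideal : IsRightIdeal R M := by
    refine ⟨⟨[], by simp, by simp⟩, ?_, ?_, ?_⟩
    · rintro a b ⟨La, ha, hLa⟩ ⟨Lb, hb, hLb⟩
      refine ⟨La ++ Lb, by rw [ha, hb, List.sum_append], ?_⟩
      intro a' ha'
      rcases List.mem_append.mp ha' with h | h
      · exact hLa a' h
      · exact hLb a' h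
    · rintro a ⟨La, ha, hLa⟩
      refine ⟨La.map (fun a => -a), by rw [aux16_sum_map_neg, ha], ?_⟩
      intro a' ha'
      obtain ⟨b, hb, rfl⟩ := List.mem_map.mp ha'
      obtain ⟨g, hg, l, hl, rfl⟩ := hLa b hb
      refine ⟨g, hg, l ++ [(-1 : R)], by simp, ?_⟩
      rw [List.foldl_append]
      simp [mul_neg_one]
    · rintro a t ⟨La, ha, hLa⟩
      refine ⟨La.map (fun a => a * t), by rw [← aux16_list_sum_mul, ha], ?_⟩
      intro a' ha'
      obtain ⟨b, hb, rfl⟩ := List.mem_map.mp ha'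
      obtain ⟨g, hg, l, hl, rfl⟩ := hLa b hb
      refine ⟨g, hg, l ++ [t], by simp, ?_⟩
      rw [List.foldl_append]
      simp
  have hGM : G ⊆ M := by
    intro g hg
    exact ⟨[g], by simp, by
      intro a ha
      rw [List.mem_singleton] at ha
      exact ⟨g, hg, [1], by simp, by simp [ha]⟩⟩
  exact hz M ⟨hMideal, hGM⟩

end Aux16h
section Aux16i
variable {R S : Type*} [NonAssocRing R] [NonAssocRing S] (f : R →+* S) (x : S)

lemma aux16_list_sum_zero (X : List (WithBot ℕ)) (h : ∀ a ∈ X, a = 0) : X.sum = 0 := by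
  induction X with
  | nil => rfl
  | cons a X ih =>
    rw [List.sum_cons, h a (by simp), ih (fun b hb => h b (by simp [hb])), add_zero]

lemma aux16_foldr_max (X : List (WithBot ℕ)) (v : WithBot ℕ) (hne : X ≠ [])
    (h : ∀ a ∈ X, a = v) : X.foldr max ⊥ = v := by
  induction X with
  | nil => exact absurd rfl hne
  | cons a X ih =>
    match X with
    | [] =>
      rw [List.foldr_cons, List.foldr_nil, h a (by simp)]
      exact max_eq_left bot_le
    | b :: X' =>
      rw [List.foldr_cons, ih (by simp) (fun c hc => h c (by simp [List.mem_cons] at hc ⊢; tauto)),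
        h a (by simp), max_self]

lemma aux16_foldl_zero_l (l : List R) : List.foldl (fun b r => r * b) (0 : R) l = 0 := by
  induction l with
  | nil => rfl
  | cons r l ih => rw [List.foldl_cons, mul_zero, ih]

lemma aux16_foldl_zero_r (l : List R) : List.foldl (fun b r => b * r) (0 : R) l = 0 := by
  induction l with
  | nil => rfl
  | cons r l ih => rw [List.foldl_cons, zero_mul, ih]

lemma aux16_foldl_mem_zero_l (l : List R) (g : R) (h : (0 : R) ∈ l) :
    List.foldl (fun b r => r * b) g l = 0 := by
  induction l generalizing g with
  | nil => simp at h
  | cons r l ih =>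
    rw [List.foldl_cons]
    rcases List.mem_cons.mp h with h0 | h0
    · rw [← h0, zero_mul]
      exact aux16_foldl_zero_l l
    · exact ih _ h0

lemma aux16_foldl_mem_zero_r (l : List R) (g : R) (h : (0 : R) ∈ l) :
    List.foldl (fun b r => b * r) g l = 0 := by
  induction l generalizing g with
  | nil => simp at h
  | cons r l ih =>
    rw [List.foldl_cons]
    rcases List.mem_cons.mp h with h0 | h0
    · rw [← h0, mul_zero]
      exact aux16_foldl_zero_r l
    · exact ih _ h0

lemma aux16_degl_monomial (hbij : Function.Bijective (lpoly f x)) (a : R) (e : ℕ) (ha : a ≠ 0) :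
    degl f x (f a * pw x e) = (e : WithBot ℕ) := by
  rw [aux16_degl_eq f x hbij,
    aux16_repr_eq_of f x hbij (aux16_lpoly_single f x e a),
    Finsupp.support_single_ne_zero e ha, Finset.max_singleton, Nat.cast_withBot]

end Aux16i
/-- for an automorphism `σ` and additive `δ` with `δ(1)=0`, `R[X;σ,δ]`
satisfies the right Euclidean division algorithm, hence the Euclidean division algorithm. -/
theorem stmt16 {R S : Type*} [NonAssocRing R] [NonAssocRing S] (f : R →+* S) (x : S) (σ δ : R → R)
    (hσadd : ∀ a b : R, σ (a + b) = σ a + σ b)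
    (hσmul : ∀ a b : R, σ (a * b) = σ a * σ b)
    (hσ1 : σ 1 = 1) (hσbij : Function.Bijective σ)
    (hδadd : ∀ a b : R, δ (a + b) = δ a + δ b) (hδ1 : δ 1 = 0)
    (hpoly : IsGPolyRing σ δ f x) :
    RightEDA f x ∧ LeftEDA f x := by
  obtain ⟨hinj, hpa, hbij, hmul⟩ := hpoly
  have hrbij : Function.Bijective (rpoly f x) :=
    aux16_rpoly_bij f x σ δ hσadd hδadd hmul hσbij hbij
  set σinv := Function.invFun σ with hσinvdef
  have hri : Function.RightInverse σinv σ := Function.rightInverse_invFun hσbij.2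
  have hiterinv : ∀ (m : ℕ) (r : R), σ^[m] (σinv^[m] r) = r := fun m r => (hri.iterate m) r
  have hiterinj : ∀ m : ℕ, Function.Injective (σ^[m]) := fun m => hσbij.1.iterate m
  have hiterne : ∀ (m : ℕ) (r : R), r ≠ 0 → σ^[m] r ≠ 0 := by
    intro m r hr h0
    exact hr (hiterinj m (by rw [h0, aux16_iter_zero hσadd]))
  have hσinvne : ∀ (m : ℕ) (r : R), r ≠ 0 → σinv^[m] r ≠ 0 := by
    intro m r hr h0
    apply hr
    rw [← hiterinv m r, h0, aux16_iter_zero hσadd]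
  have hlcr0 : lcr f x (0 : S) = 0 := by
    have h0 : aux16_rrepr f x hrbij (0 : S) = 0 :=
      aux16_rrepr_eq_of f x hrbij Finsupp.sum_zero_index
    rw [aux16_lcr_eq f x hrbij, h0]
    simp
  have hlcl0 : lcl f x (0 : S) = 0 := by
    have h0 : aux16_repr f x hbij (0 : S) = 0 := aux16_repr_zero f x hbij
    rw [aux16_lcl_eq f x hbij, h0]
    simp
  have hmonor : ∀ (a : R) (e : ℕ), a ≠ 0 → degr f x (f a * pw x e) = (e : WithBot ℕ) := by
    intro a e ha
    rw [aux16_degr_degl f x σ δ hσadd hδadd hσbij hbij hrbij hmul,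
      aux16_degl_monomial f x hbij a e ha]
  have hfacts : ∀ w : S, w ≠ 0 → ∃ d : ℕ,
      (aux16_rrepr f x hrbij w).support.max = ((d : ℕ) : WithBot ℕ) ∧
      (aux16_repr f x hbij w).support.max = ((d : ℕ) : WithBot ℕ) ∧
      degr f x w = (d : WithBot ℕ) ∧ degl f x w = (d : WithBot ℕ) ∧
      lcr f x w = aux16_rrepr f x hrbij w d ∧ lcl f x w = aux16_repr f x hbij w d ∧
      aux16_rrepr f x hrbij w d ≠ 0 ∧
      (∀ k, d < k → aux16_repr f x hbij w k = 0) ∧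
      (∀ k, d < k → aux16_rrepr f x hrbij w k = 0) ∧
      aux16_repr f x hbij w d = σ^[d] (aux16_rrepr f x hrbij w d) := by
    intro w hw
    have hrne : aux16_rrepr f x hrbij w ≠ 0 := by
      intro h
      apply hw
      rw [← aux16_rpoly_rrepr f x hrbij w, h]
      exact Finsupp.sum_zero_index
    have hnebot : (aux16_rrepr f x hrbij w).support.max ≠ ⊥ := by
      intro h
      exact hrne (Finsupp.support_eq_empty.mp (Finset.max_eq_bot.mp h))
    obtain ⟨d, hd⟩ := WithBot.ne_bot_iff_exists.mp hnebot
    · have hm : (aux16_rrepr f x hrbij w).support.max = (WithBot.some d) := hd.symm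
      have hm' : (aux16_rrepr f x hrbij w).support.max = ((d : ℕ) : WithBot ℕ) := by
        rw [hm, Nat.cast_withBot]
      have hrtop : ∀ k, d < k → aux16_rrepr f x hrbij w k = 0 :=
        (aux16_max_le_iff _ d).mp (le_of_eq hm')
      obtain ⟨hT0, hT1⟩ := aux16_T_top σ δ hσadd hδadd (aux16_rrepr f x hrbij w) d hrtop
      have hTr := aux16_T_rrepr f x σ δ hbij hrbij hmul w
      rw [hTr] at hT0 hT1
      have hrd : aux16_rrepr f x hrbij w d ≠ 0 :=
        Finsupp.mem_support_iff.mp (Finset.mem_of_max hm)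
      have hld : aux16_repr f x hbij w d ≠ 0 := by
        rw [hT1]
        exact hiterne d _ hrd
      have hlm : (aux16_repr f x hbij w).support.max = ((d : ℕ) : WithBot ℕ) :=
        aux16_max_eq _ d hld hT0
      refine ⟨d, hm', hlm, ?_, ?_, ?_, ?_, hrd,
        (aux16_max_le_iff _ d).mp (le_of_eq hlm), hrtop, hT1⟩
      · rw [aux16_degr_eq f x hrbij, hm']
      · rw [aux16_degl_eq f x hbij, hlm]
      · rw [aux16_lcr_eq f x hrbij, hm']
        simp [Nat.cast_withBot]
      · rw [aux16_lcl_eq f x hbij, hlm]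
        simp [Nat.cast_withBot]
  constructor
  · -- Right EDA
    intro n p q hq hdeg hlc
    obtain ⟨D, hqm', hqlm, hqdegr, hqdegl, hqlcr, hqlcl, hqrd, hqltop, hqrtop, hqT⟩ :=
      hfacts q hq
    obtain ⟨L, hLsum, hLmem⟩ := aux16_lIdeal_mem _ _ hlc
    have inner : ∀ (rest : List R) (w : S) (u : R),
        (∀ k, D < k → aux16_repr f x hbij w k = 0) → aux16_repr f x hbij w D = σ^[D] u →
        (∀ k, D < k → aux16_repr f x hbij
          ((rest.map fun r => f (σ^[D] r) * pw x 0).foldl (fun b a => a * b) w) k = 0) ∧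
        aux16_repr f x hbij
          ((rest.map fun r => f (σ^[D] r) * pw x 0).foldl (fun b a => a * b) w) D
          = σ^[D] (rest.foldl (fun b r => r * b) u) := by
      intro rest
      induction rest with
      | nil =>
        intro w u h1 h2
        exact ⟨h1, h2⟩
      | cons r rest ih =>
        intro w u h1 h2
        rw [List.map_cons, List.foldl_cons, List.foldl_cons]
        obtain ⟨g1, g2⟩ :=
          aux16_coeff_mul_left f x σ δ hσadd hδadd hbij hmul w (σ^[D] r) 0 D h1
        rw [Nat.zero_add] at g1 g2
        simp only [Function.iterate_zero_apply] at g2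
        apply ih
        · exact g1
        · rw [g2, h2, ← aux16_iter_mul hσmul D]
    have entry : ∀ (i : Fin n) (l : List R), l ≠ [] → lcr f x (p i) ≠ 0 → (∀ r ∈ l, r ≠ 0) →
        ∃ A : List S,
          (degr f x (p i) + ((A.map (degr f x)).sum) = (D : WithBot ℕ)) ∧
          (∀ k, D < k → aux16_repr f x hbij (A.foldl (fun b a => a * b) (p i)) k = 0) ∧
          aux16_repr f x hbij (A.foldl (fun b a => a * b) (p i)) D
            = σ^[D] (l.foldl (fun b r => r * b) (lcr f x (p i))) := by
      intro i l hl hg hlne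
      have hpine : p i ≠ 0 := by
        intro h
        apply hg
        rw [h, hlcr0]
      obtain ⟨d, him', hilm, hidegr, hidegl, hilcr, hilcl, hird, hiltop, hirtop, hiT⟩ :=
        hfacts (p i) hpine
      have hdle : d ≤ D := by
        have := hdeg i
        rw [hidegr, hqdegr] at this
        exact_mod_cast this
      obtain ⟨r1, rest, rfl⟩ := List.exists_cons_of_ne_nil hl
      have hr1 : r1 ≠ 0 := hlne r1 (by simp)
      set E := D - d with hE
      have hED : E + d = D := by omega
      obtain ⟨g1, g2⟩ :=
        aux16_coeff_mul_left f x σ δ hσadd hδadd hbij hmul (p i) (σ^[D] r1) E d hiltop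
      rw [hED] at g1 g2
      have g2' : aux16_repr f x hbij ((f (σ^[D] r1) * pw x E) * p i) D
          = σ^[D] (r1 * lcr f x (p i)) := by
        rw [g2, hiT, ← Function.iterate_add_apply σ E d, hED, hilcr,
          ← aux16_iter_mul hσmul D]
      obtain ⟨h1, h2⟩ := inner rest _ _ g1 g2'
      refine ⟨(f (σ^[D] r1) * pw x E) :: rest.map (fun r => f (σ^[D] r) * pw x 0),
        ?_, ?_, ?_⟩
      · rw [hidegr, List.map_cons, List.sum_cons, hmonor _ E (hiterne D r1 hr1)]
        have hz : ((rest.map (fun r => f (σ^[D] r) * pw x 0)).map (degr f x)).sum = 0 := by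
          apply aux16_list_sum_zero
          intro b hb
          simp only [List.map_map, List.mem_map, Function.comp] at hb
          obtain ⟨r, hr, rfl⟩ := hb
          rw [hmonor _ 0 (hiterne D r (hlne r (by simp [hr])))]
          exact Nat.cast_zero
        rw [hz, add_zero]
        have : d + E = D := by omega
        exact_mod_cast this
      · intro k hk
        rw [List.foldl_cons]
        exact h1 k hk
      · rw [List.foldl_cons, h2, List.foldl_cons]
    have build : ∀ L' : List R,
        (∀ a ∈ L', ∃ g ∈ Set.range (fun i => lcr f x (p i)), ∃ l : List R, l ≠ [] ∧
          a = l.foldl (fun b r => r * b) g) →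
        ∃ LS : List (Fin n × List S),
          (∀ t ∈ LS, degr f x (p t.1) + ((t.2.map (degr f x)).sum) = (D : WithBot ℕ)) ∧
          (∀ k, D < k → aux16_repr f x hbij
            ((LS.map fun t => t.2.foldl (fun b a => a * b) (p t.1)).sum) k = 0) ∧
          aux16_repr f x hbij
            ((LS.map fun t => t.2.foldl (fun b a => a * b) (p t.1)).sum) D
            = σ^[D] L'.sum := by
      intro L'
      induction L' with
      | nil =>
        intro _
        refine ⟨[], by simp, ?_, ?_⟩
        · intro k _
          rw [List.map_nil, List.sum_nil, aux16_repr_zero f x hbij]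
          rfl
        · rw [List.map_nil, List.sum_nil, aux16_repr_zero f x hbij, List.sum_nil,
            aux16_iter_zero hσadd]
          rfl
      | cons a L' ih =>
        intro hmem
        obtain ⟨LS', hd', hz', hc'⟩ := ih (fun b hb => hmem b (by simp [hb]))
        obtain ⟨g, hgmem, l, hl, ha⟩ := hmem a (by simp)
        obtain ⟨i, rfl⟩ := hgmem
        by_cases hA : lcr f x (p i) = 0 ∨ (0 : R) ∈ l
        · have ha0 : a = 0 := by
            rcases hA with h | h
            · have ha' : a = l.foldl (fun b r => r * b) (lcr f x (p i)) := ha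
              rw [ha', h, aux16_foldl_zero_l]
            · have ha' : a = l.foldl (fun b r => r * b) (lcr f x (p i)) := ha
              rw [ha']
              exact aux16_foldl_mem_zero_l l _ h
          refine ⟨LS', hd', hz', ?_⟩
          rw [hc', List.sum_cons, ha0, zero_add]
        · push_neg at hA
          obtain ⟨hg0, hl0⟩ := hA
          obtain ⟨A, hA1, hA2, hA3⟩ := entry i l hl hg0 (fun r hr h0 => hl0 (h0 ▸ hr))
          refine ⟨(i, A) :: LS', ?_, ?_, ?_⟩
          · intro t ht
            rcases List.mem_cons.mp ht with h | h
            · rw [h]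
              exact hA1
            · exact hd' t h
          · intro k hk
            rw [List.map_cons, List.sum_cons, aux16_repr_add f x hbij, Finsupp.add_apply,
              hA2 k hk, hz' k hk, add_zero]
          · have ha' : a = l.foldl (fun b r => r * b) (lcr f x (p i)) := ha
            rw [List.map_cons, List.sum_cons, aux16_repr_add f x hbij, Finsupp.add_apply,
              hA3, hc', ← ha', List.sum_cons, aux16_iter_add hσadd]
    obtain ⟨LS, hLSdeg, hLSz, hLSc⟩ := build L hLmem
    set s : S := (LS.map fun t => t.2.foldl (fun b a => a * b) (p t.1)).sum with hs
    have hcoeffD : aux16_repr f x hbij s D = σ^[D] (lcr f x q) := by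
      rw [hLSc, ← hLsum]
    have hlcrne : lcr f x q ≠ 0 := by
      rw [hqlcr]
      exact hqrd
    have hcoeffne : aux16_repr f x hbij s D ≠ 0 := by
      rw [hcoeffD]
      exact hiterne D _ hlcrne
    have hLSne : LS ≠ [] := by
      intro h
      apply hcoeffne
      rw [hs, h, List.map_nil, List.sum_nil, aux16_repr_zero f x hbij]
      rfl
    have hsmax : (aux16_repr f x hbij s).support.max = ((D : ℕ) : WithBot ℕ) :=
      aux16_max_eq _ D hcoeffne hLSz
    have hdegs : degr f x s = (D : WithBot ℕ) := by
      rw [aux16_degr_degl f x σ δ hσadd hδadd hσbij hbij hrbij hmul,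
        aux16_degl_eq f x hbij, hsmax]
    refine ⟨s, ⟨LS, hs, ?_⟩, ?_⟩
    · rw [hdegs]
      refine (aux16_foldr_max _ _ ?_ ?_).symm
      · intro h
        exact hLSne (by simpa using h)
      · intro b hb
        obtain ⟨t, ht, rfl⟩ := List.mem_map.mp hb
        exact hLSdeg t ht
    · have hzz : ∀ k, D ≤ k → aux16_repr f x hbij (q - s) k = 0 := by
        intro k hk
        rw [aux16_repr_sub f x hbij, Finsupp.sub_apply]
        rcases Nat.eq_or_lt_of_le hk with h | h
        · rw [← h, hqT, hcoeffD, hqlcr, sub_self]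
        · rw [hqltop k h, hLSz k h, sub_self]
      have hlt : (aux16_repr f x hbij (q - s)).support.max < ((D : ℕ) : WithBot ℕ) :=
        (aux16_max_lt_iff _ D).mpr hzz
      rw [aux16_degr_degl f x σ δ hσadd hδadd hσbij hbij hrbij hmul (q - s),
        aux16_degl_eq f x hbij, hqdegr]
      exact hlt
  · -- Left EDA
    intro n p q hq hdeg hlc
    obtain ⟨D, hqm', hqlm, hqdegr, hqdegl, hqlcr, hqlcl, hqrd, hqltop, hqrtop, hqT⟩ :=
      hfacts q hq
    obtain ⟨L, hLsum, hLmem⟩ := aux16_rIdeal_mem _ _ hlc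
    have inner : ∀ (rest : List R) (w : S) (u : R),
        (∀ k, D < k → aux16_repr f x hbij w k = 0) → aux16_repr f x hbij w D = u →
        (∀ k, D < k → aux16_repr f x hbij
          ((rest.map fun r => f (σinv^[D] r) * pw x 0).foldl (· * ·) w) k = 0) ∧
        aux16_repr f x hbij
          ((rest.map fun r => f (σinv^[D] r) * pw x 0).foldl (· * ·) w) D
          = rest.foldl (fun b r => b * r) u := by
      intro rest
      induction rest with
      | nil =>
        intro w u h1 h2
        exact ⟨h1, h2⟩
      | cons r rest ih =>
        intro w u h1 h2
        rw [List.map_cons, List.foldl_cons, List.foldl_cons]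
        obtain ⟨g1, g2⟩ :=
          aux16_coeff_mul_right f x σ δ hσadd hδadd hbij hmul w (σinv^[D] r) 0 D h1
        rw [Nat.add_zero] at g1 g2
        apply ih
        · exact g1
        · rw [g2, h2, hiterinv D r]
    have entry : ∀ (i : Fin n) (l : List R), l ≠ [] → lcl f x (p i) ≠ 0 → (∀ r ∈ l, r ≠ 0) →
        ∃ A : List S,
          (degl f x (p i) + ((A.map (degl f x)).sum) = (D : WithBot ℕ)) ∧
          (∀ k, D < k → aux16_repr f x hbij (A.foldl (· * ·) (p i)) k = 0) ∧
          aux16_repr f x hbij (A.foldl (· * ·) (p i)) D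
            = l.foldl (fun b r => b * r) (lcl f x (p i)) := by
      intro i l hl hg hlne
      have hpine : p i ≠ 0 := by
        intro h
        apply hg
        rw [h, hlcl0]
      obtain ⟨d, him', hilm, hidegr, hidegl, hilcr, hilcl, hird, hiltop, hirtop, hiT⟩ :=
        hfacts (p i) hpine
      have hdle : d ≤ D := by
        have := hdeg i
        rw [hidegl, hqdegl] at this
        exact_mod_cast this
      obtain ⟨r1, rest, rfl⟩ := List.exists_cons_of_ne_nil hl
      have hr1 : r1 ≠ 0 := hlne r1 (by simp)
      set E := D - d with hE
      have hED : d + E = D := by omega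
      obtain ⟨g1, g2⟩ :=
        aux16_coeff_mul_right f x σ δ hσadd hδadd hbij hmul (p i) (σinv^[d] r1) E d hiltop
      rw [hED] at g1 g2
      have g2' : aux16_repr f x hbij (p i * (f (σinv^[d] r1) * pw x E)) D
          = lcl f x (p i) * r1 := by
        rw [g2, hiterinv d r1, ← hilcl]
      obtain ⟨h1, h2⟩ := inner rest _ _ g1 g2'
      refine ⟨(f (σinv^[d] r1) * pw x E) :: rest.map (fun r => f (σinv^[D] r) * pw x 0),
        ?_, ?_, ?_⟩
      · rw [hidegl, List.map_cons, List.sum_cons,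
          aux16_degl_monomial f x hbij _ E (hσinvne d r1 hr1)]
        have hz : ((rest.map (fun r => f (σinv^[D] r) * pw x 0)).map (degl f x)).sum = 0 := by
          apply aux16_list_sum_zero
          intro b hb
          simp only [List.map_map, List.mem_map, Function.comp] at hb
          obtain ⟨r, hr, rfl⟩ := hb
          rw [aux16_degl_monomial f x hbij _ 0 (hσinvne D r (hlne r (by simp [hr])))]
          exact Nat.cast_zero
        rw [hz, add_zero]
        have : d + E = D := by omega
        exact_mod_cast this
      · intro k hk
        rw [List.foldl_cons]
        exact h1 k hk
      · rw [List.foldl_cons, h2, List.foldl_cons]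
    have build : ∀ L' : List R,
        (∀ a ∈ L', ∃ g ∈ Set.range (fun i => lcl f x (p i)), ∃ l : List R, l ≠ [] ∧
          a = l.foldl (fun b r => b * r) g) →
        ∃ LS : List (Fin n × List S),
          (∀ t ∈ LS, degl f x (p t.1) + ((t.2.map (degl f x)).sum) = (D : WithBot ℕ)) ∧
          (∀ k, D < k → aux16_repr f x hbij
            ((LS.map fun t => t.2.foldl (· * ·) (p t.1)).sum) k = 0) ∧
          aux16_repr f x hbij
            ((LS.map fun t => t.2.foldl (· * ·) (p t.1)).sum) D
            = L'.sum := by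
      intro L'
      induction L' with
      | nil =>
        intro _
        refine ⟨[], by simp, ?_, ?_⟩
        · intro k _
          rw [List.map_nil, List.sum_nil, aux16_repr_zero f x hbij]
          rfl
        · rw [List.map_nil, List.sum_nil, aux16_repr_zero f x hbij, List.sum_nil]
          rfl
      | cons a L' ih =>
        intro hmem
        obtain ⟨LS', hd', hz', hc'⟩ := ih (fun b hb => hmem b (by simp [hb]))
        obtain ⟨g, hgmem, l, hl, ha⟩ := hmem a (by simp)
        obtain ⟨i, rfl⟩ := hgmem
        by_cases hA : lcl f x (p i) = 0 ∨ (0 : R) ∈ l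
        · have ha0 : a = 0 := by
            rcases hA with h | h
            · have ha' : a = l.foldl (fun b r => b * r) (lcl f x (p i)) := ha
              rw [ha', h, aux16_foldl_zero_r]
            · have ha' : a = l.foldl (fun b r => b * r) (lcl f x (p i)) := ha
              rw [ha']
              exact aux16_foldl_mem_zero_r l _ h
          refine ⟨LS', hd', hz', ?_⟩
          rw [hc', List.sum_cons, ha0, zero_add]
        · push_neg at hA
          obtain ⟨hg0, hl0⟩ := hA
          obtain ⟨A, hA1, hA2, hA3⟩ := entry i l hl hg0 (fun r hr h0 => hl0 (h0 ▸ hr))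
          refine ⟨(i, A) :: LS', ?_, ?_, ?_⟩
          · intro t ht
            rcases List.mem_cons.mp ht with h | h
            · rw [h]
              exact hA1
            · exact hd' t h
          · intro k hk
            rw [List.map_cons, List.sum_cons, aux16_repr_add f x hbij, Finsupp.add_apply,
              hA2 k hk, hz' k hk, add_zero]
          · have ha' : a = l.foldl (fun b r => b * r) (lcl f x (p i)) := ha
            rw [List.map_cons, List.sum_cons, aux16_repr_add f x hbij, Finsupp.add_apply,
              hA3, hc', ← ha', List.sum_cons]
    obtain ⟨LS, hLSdeg, hLSz, hLSc⟩ := build L hLmem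
    set s : S := (LS.map fun t => t.2.foldl (· * ·) (p t.1)).sum with hs
    have hcoeffD : aux16_repr f x hbij s D = lcl f x q := by
      rw [hLSc, ← hLsum]
    have hlclne : lcl f x q ≠ 0 := by
      rw [hqlcl, hqT]
      exact hiterne D _ hqrd
    have hcoeffne : aux16_repr f x hbij s D ≠ 0 := by
      rw [hcoeffD]
      exact hlclne
    have hLSne : LS ≠ [] := by
      intro h
      apply hcoeffne
      rw [hs, h, List.map_nil, List.sum_nil, aux16_repr_zero f x hbij]
      rfl
    have hsmax : (aux16_repr f x hbij s).support.max = ((D : ℕ) : WithBot ℕ) :=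
      aux16_max_eq _ D hcoeffne hLSz
    have hdegs : degl f x s = (D : WithBot ℕ) := by
      rw [aux16_degl_eq f x hbij, hsmax]
    refine ⟨s, ⟨LS, hs, ?_⟩, ?_⟩
    · rw [hdegs]
      refine (aux16_foldr_max _ _ ?_ ?_).symm
      · intro h
        exact hLSne (by simpa using h)
      · intro b hb
        obtain ⟨t, ht, rfl⟩ := List.mem_map.mp hb
        exact hLSdeg t ht
    · have hzz : ∀ k, D ≤ k → aux16_repr f x hbij (q - s) k = 0 := by
        intro k hk
        rw [aux16_repr_sub f x hbij, Finsupp.sub_apply]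
        rcases Nat.eq_or_lt_of_le hk with h | h
        · rw [← h, hcoeffD, hqlcl, sub_self]
        · rw [hqltop k h, hLSz k h, sub_self]
      have hlt : (aux16_repr f x hbij (q - s)).support.max < ((D : ℕ) : WithBot ℕ) :=
        (aux16_max_lt_iff _ D).mpr hzz
      rw [aux16_degl_eq f x hbij (q - s), aux16_degl_eq f x hbij q, hqlm]
      exact hlt
end
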